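/- arXiv:1205.5723 — 4 statements merged into one kernel-verified Lean document; each statement's English description precedes it below -/
import Mathlib

section
/- For an n×n matrix ε with complex entries, per(1 + ε) = n! · Σ_{k=0}^n (1/(k!·(n)_k)) · Σ^♯ ε^{⊗k}, where 1 denotes the all-ones matrix, (n)_k = n(n−1)⋯(n−k+1), and Σ^♯ ε^{⊗k} is the sum of products ε_{i₁r₁}⋯ε_{i_k r_k} over all k-tuples of distinct row indices i₁,...,i_k and distinct column indices r₁,...,r_k. -/
/-!
Expanding `∏ i, (1 + ε (σ i) i)` over the subsets `s` of columns writes `per (1 + ε)` as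
`∑ k, ∑ σ, ∑_{#s = k} ∏ i ∈ s, ε (σ i) i`. Listing each `k`-subset in its `k!` orders turns the
inner sum into a sum over embeddings `e : Fin k ↪ Fin n`. The permutations act transitively on
these embeddings, so `σ • e` runs over every embedding `r` exactly `n! / (n)_k` times, which
turns `∑ σ, ∏ j, ε (σ (e j)) (e j)` into `n! / (n)_k • ∑ r, ∏ j, ε (r j) (e j)`.
-/

open Finset Equiv
open scoped Nat

namespace MulAction

variable {G X : Type*} [Group G] [MulAction G X] [IsPretransitive G X] [Fintype G]
  [DecidableEq X]

theorem card_filter_smul_eq (x y : X) :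
    #{g : G | g • x = y} = Nat.card (stabilizer G x) := by
  obtain ⟨g₀, rfl⟩ := exists_smul_eq G x y
  rw [← Fintype.card_subtype, ← Nat.card_eq_fintype_card]
  exact Nat.card_congr <| (Equiv.mulLeft g₀⁻¹).subtypeEquiv fun g => by
    simp [mem_stabilizer_iff, mul_smul, inv_smul_eq_iff]

theorem sum_smul_eq_card_stabilizer_nsmul_sum {M : Type*} [AddCommMonoid M] [Fintype X]
    (f : X → M) (x : X) :
    ∑ g : G, f (g • x) = Nat.card (stabilizer G x) • ∑ y, f y := by
  have himage : (univ : Finset G).image (· • x) = (univ : Finset X) := by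
    ext y
    obtain ⟨g, rfl⟩ := exists_smul_eq G x y
    simp
  rw [Finset.sum_comp, himage, smul_sum]
  exact sum_congr rfl fun y _ => by rw [card_filter_smul_eq]

theorem card_nsmul_sum_smul_eq_card_nsmul_sum {M : Type*} [AddCommMonoid M] [Fintype X]
    (f : X → M) (x : X) :
    Nat.card X • ∑ g : G, f (g • x) = Nat.card G • ∑ y, f y := by
  rw [sum_smul_eq_card_stabilizer_nsmul_sum, smul_smul, ← index_stabilizer_of_transitive G x,
    Subgroup.index_mul_card]

end MulAction

section Embedding

variable {ι α : Type*} [Fintype ι] [Fintype α] [DecidableEq α]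

theorem card_filter_univ_map_eq_factorial {s : Finset α} (hs : #s = Fintype.card ι) :
    #{e : ι ↪ α | univ.map e = s} = (Fintype.card ι)! := by
  let E : {e : ι ↪ α // univ.map e = s} ≃ (ι ↪ s) :=
    { toFun := fun ⟨e, he⟩ => ⟨fun i => ⟨e i, he ▸ mem_map_of_mem e (mem_univ i)⟩,
        fun _ _ h => e.injective (congrArg Subtype.val h)⟩
      invFun f := ⟨f.trans (Function.Embedding.subtype _),
        eq_of_subset_of_card_le (by simp [subset_iff]) (by simp [hs])⟩
      left_inv _ := rfl
      right_inv _ := rfl }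
  rw [← Fintype.card_subtype, Fintype.card_congr E, Fintype.card_embedding_eq, Fintype.card_coe,
    hs, Nat.descFactorial_self]

theorem sum_embedding_eq_factorial_nsmul_sum_powersetCard {M : Type*} [AddCommMonoid M]
    (g : Finset α → M) :
    ∑ e : ι ↪ α, g (univ.map e) =
      (Fintype.card ι)! • ∑ s ∈ powersetCard (Fintype.card ι) univ, g s := by
  have himage :
      (univ : Finset (ι ↪ α)).image (univ.map ·) = powersetCard (Fintype.card ι) univ := by
    ext s
    simp only [mem_image, mem_univ, true_and, mem_powersetCard, subset_univ]
    refine ⟨?_, fun hs => Function.Embedding.exists_of_card_eq_finset hs.symm⟩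
    rintro ⟨e, rfl⟩
    simp
  rw [Finset.sum_comp, himage, smul_sum]
  exact sum_congr rfl fun s hs => by
    rw [card_filter_univ_map_eq_factorial (mem_powersetCard.mp hs).2]

end Embedding

namespace Matrix

variable {R : Type*} [CommSemiring R]

theorem permanent_of_one_add {m : Type*} [Fintype m] [DecidableEq m] (ε : Matrix m m R) :
    (of fun i r => 1 + ε i r).permanent =
      ∑ k ∈ range (Fintype.card m + 1), ∑ σ : Perm m, ∑ s ∈ powersetCard k univ,
        ∏ i ∈ s, ε (σ i) i := by
  simp only [permanent, of_apply, prod_one_add, sum_powerset, card_univ]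
  exact sum_comm

theorem descFactorial_mul_factorial_nsmul_sum_perm_sum_powersetCard {α : Type*} [Fintype α]
    [DecidableEq α] (ε : Matrix α α R) (k : ℕ) :
    ((Fintype.card α).descFactorial k * k !) •
        ∑ σ : Perm α, ∑ s ∈ powersetCard k univ, ∏ i ∈ s, ε (σ i) i =
      (Fintype.card α)! • ∑ i : Fin k ↪ α, ∑ r : Fin k ↪ α, ∏ j, ε (i j) (r j) := by
  have := Equiv.Perm.isMultiplyPretransitive α k
  have hsubsets (σ : Perm α) : k ! • ∑ s ∈ powersetCard k univ, ∏ i ∈ s, ε (σ i) i =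
      ∑ e : Fin k ↪ α, ∏ j, ε ((σ • e) j) (e j) := by
    simpa [prod_map] using (sum_embedding_eq_factorial_nsmul_sum_powersetCard (ι := Fin k)
      fun s => ∏ i ∈ s, ε (σ i) i).symm
  have horbit (e : Fin k ↪ α) :
      (Fintype.card α).descFactorial k • ∑ σ : Perm α, ∏ j, ε ((σ • e) j) (e j) =
        (Fintype.card α)! • ∑ r : Fin k ↪ α, ∏ j, ε (r j) (e j) := by
    simpa [Nat.card_eq_fintype_card, Fintype.card_embedding_eq, Fintype.card_perm] using
      MulAction.card_nsmul_sum_smul_eq_card_nsmul_sum (G := Perm α)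
        (fun r => ∏ j, ε (r j) (e j)) e
  calc _ = (Fintype.card α).descFactorial k •
        ∑ e : Fin k ↪ α, ∑ σ : Perm α, ∏ j, ε ((σ • e) j) (e j) := by
        rw [mul_smul, smul_sum, sum_congr rfl fun σ _ => hsubsets σ, sum_comm]
    _ = _ := by
        rw [smul_sum, sum_congr rfl fun e _ => horbit e, ← smul_sum, sum_comm]

end Matrix

/-- Permanental expansion: `per(1+ε) = n! Σ_{k=0}^n (1/(k! (n)_k)) Σ^♯ ε^{⊗k}`, where
`Σ^♯ ε^{⊗k}` sums products over `k`-tuples of distinct rows and distinct columns. -/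
theorem permanent_expansion {n : ℕ} (ε : Matrix (Fin n) (Fin n) ℂ) :
    (Matrix.of fun i r => 1 + ε i r).permanent =
      (n.factorial : ℂ) * ∑ k ∈ Finset.range (n + 1),
        (1 / ((k.factorial : ℂ) * (n.descFactorial k : ℂ))) *
          ∑ i : Fin k ↪ Fin n, ∑ r : Fin k ↪ Fin n, ∏ j, ε (i j) (r j) := by
  rw [Matrix.permanent_of_one_add, Fintype.card_fin, mul_sum]
  refine sum_congr rfl fun k hkn => ?_
  have hkey := Matrix.descFactorial_mul_factorial_nsmul_sum_perm_sum_powersetCard ε k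
  simp only [Fintype.card_fin, nsmul_eq_mul, Nat.cast_mul] at hkey
  have hdesc : (n.descFactorial k : ℂ) ≠ 0 := by
    exact_mod_cast (Nat.descFactorial_pos.mpr (Nat.lt_succ_iff.mp (mem_range.mp hkn))).ne'
  have hfact : (k ! : ℂ) ≠ 0 := by exact_mod_cast k.factorial_ne_zero
  field_simp
  linear_combination hkey
end

section
/- Let ε be an n×n matrix (n ≥ 3) whose row sums and column sums are all zero. Then Σ^♯ ε^{⊗3} = 4·Σ_{i,r} ε_{ir}³, where Σ^♯ ε^{⊗3} is the sum of ε_{i₁r₁}ε_{i₂r₂}ε_{i₃r₃} over all triples with i₁,i₂,i₃ pairwise distinct and r₁,r₂,r₃ pairwise distinct. -/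
open Finset

/-- Kronecker delta. -/
noncomputable def dd {n : ℕ} (a b : Fin n) : ℝ := if a = b then 1 else 0

/-- Inclusion–exclusion expansion of the pairwise-distinct indicator. -/
noncomputable def FF {n : ℕ} (x₁ x₂ x₃ : Fin n) : ℝ :=
  1 - dd x₁ x₂ - dd x₁ x₃ - dd x₂ x₃ + 2 * dd x₁ x₂ * dd x₁ x₃

lemma ind_eq {n : ℕ} (x₁ x₂ x₃ r₁ r₂ r₃ : Fin n) (x : ℝ) :
    (if (x₁ ≠ x₂ ∧ x₁ ≠ x₃ ∧ x₂ ≠ x₃) ∧ (r₁ ≠ r₂ ∧ r₁ ≠ r₃ ∧ r₂ ≠ r₃) then x else 0)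
      = FF x₁ x₂ x₃ * FF r₁ r₂ r₃ * x := by
  unfold FF dd
  split_ifs <;> simp_all <;> first | (left; norm_num) | ring

lemma key {n : ℕ} (a b c : Fin n → ℝ) (ha : ∑ x, a x = 0) (hb : ∑ x, b x = 0)
    (hc : ∑ x, c x = 0) :
    ∑ x₁, ∑ x₂, ∑ x₃, FF x₁ x₂ x₃ * (a x₁ * b x₂ * c x₃)
      = 2 * ∑ x, a x * b x * c x := by
  have step3 : ∀ x₁ x₂ : Fin n, ∑ x₃, FF x₁ x₂ x₃ * (a x₁ * b x₂ * c x₃)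
      = (2 * dd x₁ x₂ - 1) * (a x₁ * b x₂ * c x₁) - a x₁ * b x₂ * c x₂ := by
    intro x₁ x₂
    have hp : ∀ x₃, FF x₁ x₂ x₃ * (a x₁ * b x₂ * c x₃) =
        (1 - dd x₁ x₂) * (a x₁ * b x₂) * c x₃
        + (2 * dd x₁ x₂ - 1) * (if x₁ = x₃ then a x₁ * b x₂ * c x₃ else 0)
        - (if x₂ = x₃ then a x₁ * b x₂ * c x₃ else 0) := by
      intro x₃; unfold FF dd; split_ifs <;> ring
    rw [Finset.sum_congr rfl (fun x₃ _ => hp x₃)]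
    rw [Finset.sum_sub_distrib, Finset.sum_add_distrib, ← Finset.mul_sum, hc,
      ← Finset.mul_sum, Finset.sum_ite_eq, Finset.sum_ite_eq]
    simp
  have step2 : ∀ x₁ : Fin n, ∑ x₂, ((2 * dd x₁ x₂ - 1) * (a x₁ * b x₂ * c x₁)
        - a x₁ * b x₂ * c x₂)
      = 2 * (a x₁ * b x₁ * c x₁) - a x₁ * ∑ x₂, b x₂ * c x₂ := by
    intro x₁
    have hp : ∀ x₂, (2 * dd x₁ x₂ - 1) * (a x₁ * b x₂ * c x₁) - a x₁ * b x₂ * c x₂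
        = 2 * (if x₁ = x₂ then a x₁ * b x₂ * c x₁ else 0)
          - (a x₁ * c x₁) * b x₂ - a x₁ * (b x₂ * c x₂) := by
      intro x₂; unfold dd; split_ifs <;> ring
    rw [Finset.sum_congr rfl (fun x₂ _ => hp x₂), Finset.sum_sub_distrib,
      Finset.sum_sub_distrib, ← Finset.mul_sum, ← Finset.mul_sum, ← Finset.mul_sum,
      hb, Finset.sum_ite_eq]
    simp
  calc ∑ x₁, ∑ x₂, ∑ x₃, FF x₁ x₂ x₃ * (a x₁ * b x₂ * c x₃)
      = ∑ x₁, (2 * (a x₁ * b x₁ * c x₁) - a x₁ * ∑ x₂, b x₂ * c x₂) := by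
        refine Finset.sum_congr rfl fun x₁ _ => ?_
        rw [Finset.sum_congr rfl (fun x₂ _ => step3 x₁ x₂), step2]
    _ = 2 * ∑ x, a x * b x * c x := by
        rw [Finset.sum_sub_distrib, ← Finset.mul_sum, ← Finset.sum_mul, ha]
        ring

/-- For a matrix with vanishing row and column sums, `Σ^♯ ε^{⊗3} = 4 Σ ε_{ir}³`. -/
theorem restricted_sum_three {n : ℕ} (hn : 3 ≤ n) (ε : Matrix (Fin n) (Fin n) ℝ)
    (hrow : ∀ i, ∑ r, ε i r = 0) (hcol : ∀ r, ∑ i, ε i r = 0) :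
    ∑ i₁, ∑ i₂, ∑ i₃, ∑ r₁, ∑ r₂, ∑ r₃,
        (if (i₁ ≠ i₂ ∧ i₁ ≠ i₃ ∧ i₂ ≠ i₃) ∧ (r₁ ≠ r₂ ∧ r₁ ≠ r₃ ∧ r₂ ≠ r₃) then
          ε i₁ r₁ * ε i₂ r₂ * ε i₃ r₃ else 0) =
      4 * ∑ i, ∑ r, ε i r ^ 3 := by
  have inner : ∀ i₁ i₂ i₃ : Fin n,
      ∑ r₁, ∑ r₂, ∑ r₃, FF i₁ i₂ i₃ * FF r₁ r₂ r₃ * (ε i₁ r₁ * ε i₂ r₂ * ε i₃ r₃)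
        = FF i₁ i₂ i₃ * (2 * ∑ r, ε i₁ r * ε i₂ r * ε i₃ r) := by
    intro i₁ i₂ i₃
    rw [← key (fun r => ε i₁ r) (fun r => ε i₂ r) (fun r => ε i₃ r)
      (hrow i₁) (hrow i₂) (hrow i₃)]
    simp only [Finset.mul_sum, mul_assoc]
  calc ∑ i₁, ∑ i₂, ∑ i₃, ∑ r₁, ∑ r₂, ∑ r₃,
        (if (i₁ ≠ i₂ ∧ i₁ ≠ i₃ ∧ i₂ ≠ i₃) ∧ (r₁ ≠ r₂ ∧ r₁ ≠ r₃ ∧ r₂ ≠ r₃) then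
          ε i₁ r₁ * ε i₂ r₂ * ε i₃ r₃ else 0)
      = ∑ i₁, ∑ i₂, ∑ i₃, FF i₁ i₂ i₃ * (2 * ∑ r, ε i₁ r * ε i₂ r * ε i₃ r) := by
        refine Finset.sum_congr rfl fun i₁ _ => Finset.sum_congr rfl fun i₂ _ =>
          Finset.sum_congr rfl fun i₃ _ => ?_
        rw [← inner i₁ i₂ i₃]
        exact Finset.sum_congr rfl fun r₁ _ => Finset.sum_congr rfl fun r₂ _ =>
          Finset.sum_congr rfl fun r₃ _ => ind_eq _ _ _ _ _ _ _
    _ = ∑ i₁, ∑ i₂, ∑ i₃, ∑ r, 2 * (FF i₁ i₂ i₃ * (ε i₁ r * ε i₂ r * ε i₃ r)) := by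
        refine Finset.sum_congr rfl fun i₁ _ => Finset.sum_congr rfl fun i₂ _ =>
          Finset.sum_congr rfl fun i₃ _ => ?_
        rw [Finset.mul_sum, Finset.mul_sum]
        exact Finset.sum_congr rfl fun r _ => by ring
    _ = ∑ i₁, ∑ i₂, ∑ r, ∑ i₃, 2 * (FF i₁ i₂ i₃ * (ε i₁ r * ε i₂ r * ε i₃ r)) :=
        Finset.sum_congr rfl fun i₁ _ => Finset.sum_congr rfl fun i₂ _ =>
          Finset.sum_comm
    _ = ∑ i₁, ∑ r, ∑ i₂, ∑ i₃, 2 * (FF i₁ i₂ i₃ * (ε i₁ r * ε i₂ r * ε i₃ r)) :=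
        Finset.sum_congr rfl fun i₁ _ => Finset.sum_comm
    _ = ∑ r, ∑ i₁, ∑ i₂, ∑ i₃, 2 * (FF i₁ i₂ i₃ * (ε i₁ r * ε i₂ r * ε i₃ r)) :=
        Finset.sum_comm
    _ = ∑ r, 2 * (2 * ∑ i, ε i r * ε i r * ε i r) := by
        refine Finset.sum_congr rfl fun r _ => ?_
        have hk := key (fun i => ε i r) (fun i => ε i r) (fun i => ε i r)
          (hcol r) (hcol r) (hcol r)
        calc ∑ i₁, ∑ i₂, ∑ i₃, 2 * (FF i₁ i₂ i₃ * (ε i₁ r * ε i₂ r * ε i₃ r))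
            = 2 * ∑ i₁, ∑ i₂, ∑ i₃, FF i₁ i₂ i₃ * (ε i₁ r * ε i₂ r * ε i₃ r) := by
              simp only [Finset.mul_sum]
          _ = 2 * (2 * ∑ i, ε i r * ε i r * ε i r) := by rw [hk]
    _ = 4 * ∑ i, ∑ r, ε i r ^ 3 := by
        have h1 : ∀ r : Fin n, 2 * (2 * ∑ i, ε i r * ε i r * ε i r)
            = 4 * ∑ i, ε i r ^ 3 := by
          intro r
          have : ∑ i, ε i r * ε i r * ε i r = ∑ i, ε i r ^ 3 :=
            Finset.sum_congr rfl fun i _ => by ring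
          rw [this]; ring
        rw [Finset.sum_congr rfl fun r _ => h1 r, ← Finset.mul_sum, Finset.sum_comm]
end

section
/- Let ε be an n×n matrix (n ≥ 4) with all row and column sums zero. Then Σ^♯ ε^{⊗4} = 36·Σ_{i,r} ε_{ir}⁴ − 18·Σ_i Σ_{r,s} ε_{ir}²ε_{is}² − 18·Σ_r Σ_{i,j} ε_{ir}²ε_{jr}² + 3·(tr(εᵀε))² + 6·tr(εᵀεεᵀε), where Σ^♯ ε^{⊗4} is the sum of ε_{i₁r₁}⋯ε_{i₄r₄} over 4-tuples of pairwise distinct row indices and pairwise distinct column indices. -/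
open Matrix


open Finset

variable {α : Type*} [Fintype α] [DecidableEq α]

lemma myT2 (h0 h1 : α → ℝ) :
    ∑ a, ∑ b ∈ univ.erase a, h0 a * h1 b
      = (∑ a, h0 a) * (∑ a, h1 a) - ∑ a, h0 a * h1 a := by
  have key : ∀ a : α, ∑ b ∈ univ.erase a, h1 b = (∑ x, h1 x) - h1 a :=
    fun a => Finset.sum_erase_eq_sub (mem_univ a)
  simp only [← Finset.mul_sum, key, mul_sub, Finset.sum_sub_distrib, ← Finset.sum_mul]

lemma myT3 (h0 h1 h2 : α → ℝ) :
    ∑ a, ∑ b ∈ univ.erase a, ∑ c ∈ (univ.erase a).erase b, h0 a * h1 b * h2 c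
      = (∑ x, h2 x) * ((∑ x, h0 x) * (∑ x, h1 x) - ∑ x, h0 x * h1 x)
        - ((∑ x, h0 x * h2 x) * (∑ x, h1 x) - ∑ x, h0 x * h1 x * h2 x)
        - ((∑ x, h0 x) * (∑ x, h1 x * h2 x) - ∑ x, h0 x * h1 x * h2 x) := by
  have key : ∀ a : α, ∀ b ∈ univ.erase a,
      ∑ c ∈ (univ.erase a).erase b, h2 c = (∑ x, h2 x) - h2 a - h2 b := by
    intro a b hb
    rw [Finset.sum_erase_eq_sub hb, Finset.sum_erase_eq_sub (mem_univ a)]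
  calc ∑ a, ∑ b ∈ univ.erase a, ∑ c ∈ (univ.erase a).erase b, h0 a * h1 b * h2 c
      = ∑ a, ∑ b ∈ univ.erase a,
          ((∑ x, h2 x) * (h0 a * h1 b) - (h0 a * h2 a) * h1 b - h0 a * (h1 b * h2 b)) := by
        refine Finset.sum_congr rfl fun a _ => Finset.sum_congr rfl fun b hb => ?_
        rw [← Finset.mul_sum, key a b hb]; ring
    _ = (∑ x, h2 x) * (∑ a, ∑ b ∈ univ.erase a, h0 a * h1 b)
          - (∑ a, ∑ b ∈ univ.erase a, (h0 a * h2 a) * h1 b)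
          - (∑ a, ∑ b ∈ univ.erase a, h0 a * (h1 b * h2 b)) := by
        simp only [Finset.sum_sub_distrib, Finset.mul_sum]
    _ = _ := by
        rw [myT2 h0 h1, myT2 (fun a => h0 a * h2 a) h1, myT2 h0 (fun b => h1 b * h2 b)]
        have e1 : ∑ a, h0 a * h2 a * h1 a = ∑ x, h0 x * h1 x * h2 x :=
          Finset.sum_congr rfl fun x _ => by ring
        have e2 : ∑ a, h0 a * (h1 a * h2 a) = ∑ x, h0 x * h1 x * h2 x :=
          Finset.sum_congr rfl fun x _ => by ring
        rw [e1, e2]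

/-- Sum over quadruples of pairwise distinct elements. -/
def D4 (F : α → α → α → α → ℝ) : ℝ :=
  ∑ a, ∑ b ∈ univ.erase a, ∑ c ∈ (univ.erase a).erase b,
    ∑ d ∈ ((univ.erase a).erase b).erase c, F a b c d

lemma D4_prod (g0 g1 g2 g3 : α → ℝ) (hg0 : ∑ x, g0 x = 0) (hg1 : ∑ x, g1 x = 0)
    (hg2 : ∑ x, g2 x = 0) (hg3 : ∑ x, g3 x = 0) :
    D4 (fun a b c d => g0 a * g1 b * g2 c * g3 d)
      = (∑ x, g0 x * g1 x) * (∑ x, g2 x * g3 x)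
        + (∑ x, g0 x * g2 x) * (∑ x, g1 x * g3 x)
        + (∑ x, g0 x * g3 x) * (∑ x, g1 x * g2 x)
        - 6 * ∑ x, g0 x * g1 x * g2 x * g3 x := by
  have key : ∀ a : α, ∀ b ∈ univ.erase a, ∀ c ∈ (univ.erase a).erase b,
      ∑ d ∈ ((univ.erase a).erase b).erase c, g3 d = - g3 a - g3 b - g3 c := by
    intro a b hb c hc
    rw [Finset.sum_erase_eq_sub hc, Finset.sum_erase_eq_sub hb,
      Finset.sum_erase_eq_sub (mem_univ a), hg3]
    ring
  have step : D4 (fun a b c d => g0 a * g1 b * g2 c * g3 d)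
      = - (∑ a, ∑ b ∈ univ.erase a, ∑ c ∈ (univ.erase a).erase b,
            (g0 a * g3 a) * g1 b * g2 c)
        - (∑ a, ∑ b ∈ univ.erase a, ∑ c ∈ (univ.erase a).erase b,
            g0 a * (g1 b * g3 b) * g2 c)
        - (∑ a, ∑ b ∈ univ.erase a, ∑ c ∈ (univ.erase a).erase b,
            g0 a * g1 b * (g2 c * g3 c)) := by
    unfold D4
    simp only [← Finset.sum_neg_distrib, ← Finset.sum_sub_distrib]
    refine Finset.sum_congr rfl fun a _ => Finset.sum_congr rfl fun b hb =>
      Finset.sum_congr rfl fun c hc => ?_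
    rw [← Finset.mul_sum, key a b hb c hc]
    ring
  rw [step, myT3 (fun a => g0 a * g3 a) g1 g2, myT3 g0 (fun b => g1 b * g3 b) g2,
    myT3 g0 g1 (fun c => g2 c * g3 c)]
  simp only [hg0, hg1, hg2]
  have e1 : ∑ x, g0 x * g3 x * g1 x * g2 x = ∑ x, g0 x * g1 x * g2 x * g3 x :=
    Finset.sum_congr rfl fun x _ => by ring
  have e3 : ∑ x, g0 x * (g1 x * g3 x) * g2 x = ∑ x, g0 x * g1 x * g2 x * g3 x :=
    Finset.sum_congr rfl fun x _ => by ring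
  have e5 : ∑ x, g0 x * g1 x * (g2 x * g3 x) = ∑ x, g0 x * g1 x * g2 x * g3 x :=
    Finset.sum_congr rfl fun x _ => by ring
  rw [e1, e3, e5]
  ring_nf

lemma D4_congr {F G : α → α → α → α → ℝ} (h : ∀ a b c d, F a b c d = G a b c d) :
    D4 F = D4 G := by
  unfold D4; simp only [h]

lemma D4_sub (F G : α → α → α → α → ℝ) :
    D4 (fun a b c d => F a b c d - G a b c d) = D4 F - D4 G := by
  unfold D4; simp only [Finset.sum_sub_distrib]

lemma D4_add (F G : α → α → α → α → ℝ) :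
    D4 (fun a b c d => F a b c d + G a b c d) = D4 F + D4 G := by
  unfold D4; simp only [Finset.sum_add_distrib]

lemma D4_const_mul (r : ℝ) (F : α → α → α → α → ℝ) :
    D4 (fun a b c d => r * F a b c d) = r * D4 F := by
  unfold D4; simp only [← Finset.mul_sum]

lemma D4_sum {β : Type*} (s : Finset β) (G : β → α → α → α → α → ℝ) :
    D4 (fun a b c d => ∑ r ∈ s, G r a b c d)
      = ∑ r ∈ s, D4 (fun a b c d => G r a b c d) := by
  unfold D4
  rw [← Finset.sum_comm]
  refine Finset.sum_congr rfl fun a _ => ?_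
  rw [← Finset.sum_comm]
  refine Finset.sum_congr rfl fun b _ => ?_
  rw [← Finset.sum_comm]
  refine Finset.sum_congr rfl fun c _ => ?_
  rw [← Finset.sum_comm]

lemma sum_emb (F : α → α → α → α → ℝ) :
    ∑ f : Fin 4 ↪ α, F (f 0) (f 1) (f 2) (f 3) = D4 F := by
  classical
  have step1 : ∑ f : Fin 4 ↪ α, F (f 0) (f 1) (f 2) (f 3)
      = ∑ p ∈ (Finset.univ.filter
          (fun p : α × α × α × α => p.2.1 ≠ p.1 ∧ (p.2.2.1 ≠ p.1 ∧ p.2.2.1 ≠ p.2.1)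
            ∧ (p.2.2.2 ≠ p.1 ∧ p.2.2.2 ≠ p.2.1 ∧ p.2.2.2 ≠ p.2.2.1))),
          F p.1 p.2.1 p.2.2.1 p.2.2.2 := by
    refine Finset.sum_bij' (fun f _ => ((f 0 : α), f 1, f 2, f 3))
      (fun p hp => ⟨![p.1, p.2.1, p.2.2.1, p.2.2.2], ?_⟩) ?_ ?_ ?_ ?_ ?_
    · simp only [Finset.mem_filter, Finset.mem_univ, true_and] at hp
      obtain ⟨h1, ⟨h2, h3⟩, h4, h5, h6⟩ := hp
      intro i j hij
      fin_cases i <;> fin_cases j <;> simp_all [Matrix.cons_val_zero, Matrix.cons_val_one]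
    · intro f _
      simp only [Finset.mem_filter, Finset.mem_univ, true_and]
      refine ⟨f.injective.ne (by decide), ⟨f.injective.ne (by decide), f.injective.ne (by decide)⟩,
        f.injective.ne (by decide), f.injective.ne (by decide), f.injective.ne (by decide)⟩
    · intro p hp; exact Finset.mem_univ _
    · intro f _
      ext x
      fin_cases x <;> simp
    · intro p hp
      simp
    · intro f _
      rfl
  rw [step1, Finset.sum_filter]
  simp only [Fintype.sum_prod_type]
  unfold D4
  refine Finset.sum_congr rfl fun a _ => ?_
  rw [← Finset.sum_subset (Finset.subset_univ (Finset.univ.erase a))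
    (fun b _ hb => by simp only [Finset.mem_erase, Finset.mem_univ, and_true,
      not_not] at hb; simp [hb])]
  refine Finset.sum_congr rfl fun b hb => ?_
  have hba : b ≠ a := (Finset.mem_erase.mp hb).1
  rw [← Finset.sum_subset (Finset.subset_univ ((Finset.univ.erase a).erase b))
    (fun c _ hc => ?_)]
  · refine Finset.sum_congr rfl fun c hc => ?_
    have hcb : c ≠ b := (Finset.mem_erase.mp hc).1
    have hca : c ≠ a := (Finset.mem_erase.mp (Finset.mem_erase.mp hc).2).1
    rw [← Finset.sum_subset (Finset.subset_univ (((Finset.univ.erase a).erase b).erase c))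
      (fun d _ hd => ?_)]
    · refine Finset.sum_congr rfl fun d hd => ?_
      have hdc : d ≠ c := (Finset.mem_erase.mp hd).1
      have hdb : d ≠ b := (Finset.mem_erase.mp (Finset.mem_erase.mp hd).2).1
      have hda : d ≠ a := (Finset.mem_erase.mp (Finset.mem_erase.mp (Finset.mem_erase.mp hd).2).2).1
      simp [hba, hca, hcb, hda, hdb, hdc]
    · simp only [Finset.mem_erase, Finset.mem_univ, and_true, not_and, not_not] at hd
      by_cases h1 : d = c
      · simp [h1]
      · by_cases h2 : d = b
        · simp [h2]
        · have h3 : d = a := by tauto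
          simp [h3]
  · simp only [Finset.mem_erase, Finset.mem_univ, and_true, not_and, not_not] at hc
    by_cases h1 : c = b
    · simp [h1]
    · have h2 : c = a := by tauto
      simp [h2]

open Matrix

/-- For a matrix with vanishing row and column sums, the degree-four restricted sum:
`Σ^♯ ε^{⊗4} = 36 Σ ε⁴ − 18 Σ_i Σ_{r,s} ε_{ir}²ε_{is}² − 18 Σ_r Σ_{i,j} ε_{ir}²ε_{jr}²
 + 3 tr(εᵀε)² + 6 tr(εᵀεεᵀε)`. -/
theorem restricted_sum_four {n : ℕ} (hn : 4 ≤ n) (ε : Matrix (Fin n) (Fin n) ℝ)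
    (hrow : ∀ i, ∑ r, ε i r = 0) (hcol : ∀ r, ∑ i, ε i r = 0) :
    ∑ i : Fin 4 ↪ Fin n, ∑ r : Fin 4 ↪ Fin n, ∏ j, ε (i j) (r j) =
      36 * (∑ i, ∑ r, ε i r ^ 4)
        - 18 * (∑ i, ∑ r, ∑ s, ε i r ^ 2 * ε i s ^ 2)
        - 18 * (∑ r, ∑ i, ∑ j, ε i r ^ 2 * ε j r ^ 2)
        + 3 * (εᵀ * ε).trace ^ 2
        + 6 * (εᵀ * ε * εᵀ * ε).trace := by
  classical
  -- Step 0 : rewrite the embedding sums as sums over distinct quadruples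
  have step0 : ∑ i : Fin 4 ↪ Fin n, ∑ r : Fin 4 ↪ Fin n, ∏ j, ε (i j) (r j)
      = D4 (fun a b c d => D4 (fun p q u v => ε a p * ε b q * ε c u * ε d v)) := by
    rw [← sum_emb (fun a b c d => D4 (fun p q u v => ε a p * ε b q * ε c u * ε d v))]
    refine Finset.sum_congr rfl fun f _ => ?_
    rw [← sum_emb (fun p q u v => ε (f 0) p * ε (f 1) q * ε (f 2) u * ε (f 3) v)]
    exact Finset.sum_congr rfl fun g _ => by simp [Fin.prod_univ_four]
  -- Step 1 : evaluate the inner distinct sum using vanishing row sums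
  have key : D4 (fun a b c d => D4 (fun p q u v => ε a p * ε b q * ε c u * ε d v))
      = D4 (fun a b c d => (∑ x, ε a x * ε b x) * (∑ x, ε c x * ε d x))
        + D4 (fun a b c d => (∑ x, ε a x * ε c x) * (∑ x, ε b x * ε d x))
        + D4 (fun a b c d => (∑ x, ε a x * ε d x) * (∑ x, ε b x * ε c x))
        - 6 * D4 (fun a b c d => ∑ x, ε a x * ε b x * ε c x * ε d x) := by
    rw [← D4_add, ← D4_add, ← D4_const_mul, ← D4_sub]
    exact D4_congr fun a b c d => by
      simpa using D4_prod (fun x => ε a x) (fun x => ε b x) (fun x => ε c x) (fun x => ε d x)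
        (hrow a) (hrow b) (hrow c) (hrow d)
  -- helper to swap a double sum out of D4
  have swap2 : ∀ G : Fin n → Fin n → Fin n → Fin n → Fin n → Fin n → ℝ,
      D4 (fun a b c d => ∑ p, ∑ q, G p q a b c d)
        = ∑ p, ∑ q, D4 (fun a b c d => G p q a b c d) := by
    intro G
    rw [D4_sum]
    exact Finset.sum_congr rfl fun p _ => D4_sum _ _

  have hNsymm : ∀ p q : Fin n, (∑ x, ε x q * ε x p) = ∑ x, ε x p * ε x q :=
    fun p q => Finset.sum_congr rfl fun x _ => mul_comm _ _
  have P1 : D4 (fun a b c d => (∑ x, ε a x * ε b x) * (∑ x, ε c x * ε d x))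
      = ∑ p, ∑ q, ((∑ x, ε x p * ε x p) * (∑ x, ε x q * ε x q) + (∑ x, ε x p * ε x q) * (∑ x, ε x p * ε x q) + (∑ x, ε x p * ε x q) * (∑ x, ε x p * ε x q) - 6 * ∑ x, ε x p * ε x p * ε x q * ε x q) := by
    have e : D4 (fun a b c d => (∑ x, ε a x * ε b x) * (∑ x, ε c x * ε d x))
        = D4 (fun a b c d => ∑ p, ∑ q, (ε a p * ε b p) * (ε c q * ε d q)) :=
      D4_congr fun a b c d => Finset.sum_mul_sum _ _ _ _
    rw [e, swap2]
    refine Finset.sum_congr rfl fun p _ => Finset.sum_congr rfl fun q _ => ?_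
    calc D4 (fun a b c d => (ε a p * ε b p) * (ε c q * ε d q))
        = D4 (fun a b c d => ε a p * ε b p * ε c q * ε d q) :=
          D4_congr fun a b c d => by ring
      _ = _ := D4_prod (fun x => ε x p) (fun x => ε x p) (fun x => ε x q) (fun x => ε x q)
          (hcol p) (hcol p) (hcol q) (hcol q)
  have P2 : D4 (fun a b c d => (∑ x, ε a x * ε c x) * (∑ x, ε b x * ε d x))
      = ∑ p, ∑ q, ((∑ x, ε x p * ε x p) * (∑ x, ε x q * ε x q) + (∑ x, ε x p * ε x q) * (∑ x, ε x p * ε x q) + (∑ x, ε x p * ε x q) * (∑ x, ε x p * ε x q) - 6 * ∑ x, ε x p * ε x p * ε x q * ε x q) := by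
    have e : D4 (fun a b c d => (∑ x, ε a x * ε c x) * (∑ x, ε b x * ε d x))
        = D4 (fun a b c d => ∑ p, ∑ q, (ε a p * ε c p) * (ε b q * ε d q)) :=
      D4_congr fun a b c d => Finset.sum_mul_sum _ _ _ _
    rw [e, swap2]
    refine Finset.sum_congr rfl fun p _ => Finset.sum_congr rfl fun q _ => ?_
    calc D4 (fun a b c d => (ε a p * ε c p) * (ε b q * ε d q))
        = D4 (fun a b c d => ε a p * ε b q * ε c p * ε d q) :=
          D4_congr fun a b c d => by ring
      _ = _ := by
          rw [D4_prod (fun x => ε x p) (fun x => ε x q) (fun x => ε x p) (fun x => ε x q)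
            (hcol p) (hcol q) (hcol p) (hcol q), hNsymm p q]
          rw [show (∑ x, ε x p * ε x q * ε x p * ε x q)
              = ∑ x, ε x p * ε x p * ε x q * ε x q from
            Finset.sum_congr rfl fun x _ => by ring]
          ring
  have P3 : D4 (fun a b c d => (∑ x, ε a x * ε d x) * (∑ x, ε b x * ε c x))
      = ∑ p, ∑ q, ((∑ x, ε x p * ε x p) * (∑ x, ε x q * ε x q) + (∑ x, ε x p * ε x q) * (∑ x, ε x p * ε x q) + (∑ x, ε x p * ε x q) * (∑ x, ε x p * ε x q) - 6 * ∑ x, ε x p * ε x p * ε x q * ε x q) := by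
    have e : D4 (fun a b c d => (∑ x, ε a x * ε d x) * (∑ x, ε b x * ε c x))
        = D4 (fun a b c d => ∑ p, ∑ q, (ε a p * ε d p) * (ε b q * ε c q)) :=
      D4_congr fun a b c d => Finset.sum_mul_sum _ _ _ _
    rw [e, swap2]
    refine Finset.sum_congr rfl fun p _ => Finset.sum_congr rfl fun q _ => ?_
    calc D4 (fun a b c d => (ε a p * ε d p) * (ε b q * ε c q))
        = D4 (fun a b c d => ε a p * ε b q * ε c q * ε d p) :=
          D4_congr fun a b c d => by ring
      _ = _ := by
          rw [D4_prod (fun x => ε x p) (fun x => ε x q) (fun x => ε x q) (fun x => ε x p)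
            (hcol p) (hcol q) (hcol q) (hcol p), hNsymm p q]
          rw [show (∑ x, ε x p * ε x q * ε x q * ε x p)
              = ∑ x, ε x p * ε x p * ε x q * ε x q from
            Finset.sum_congr rfl fun x _ => by ring]
          ring
  have P4 : D4 (fun a b c d => ∑ x, ε a x * ε b x * ε c x * ε d x)
      = ∑ p, ((∑ x, ε x p * ε x p) * (∑ x, ε x p * ε x p) + (∑ x, ε x p * ε x p) * (∑ x, ε x p * ε x p) + (∑ x, ε x p * ε x p) * (∑ x, ε x p * ε x p) - 6 * ∑ x, ε x p * ε x p * ε x p * ε x p) := by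
    rw [D4_sum]
    exact Finset.sum_congr rfl fun p _ =>
      D4_prod (fun x => ε x p) (fun x => ε x p) (fun x => ε x p) (fun x => ε x p)
        (hcol p) (hcol p) (hcol p) (hcol p)
  have hA : (∑ i, ∑ r, ε i r ^ 4) = ∑ p, ∑ x, ε x p * ε x p * ε x p * ε x p := by
    rw [Finset.sum_comm]
    exact Finset.sum_congr rfl fun p _ => Finset.sum_congr rfl fun x _ => by ring
  have hB : (∑ i, ∑ r, ∑ s, ε i r ^ 2 * ε i s ^ 2)
      = ∑ p, ∑ q, ∑ x, ε x p * ε x p * ε x q * ε x q := by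
    rw [Finset.sum_comm]
    refine Finset.sum_congr rfl fun p _ => ?_
    rw [Finset.sum_comm]
    exact Finset.sum_congr rfl fun q _ => Finset.sum_congr rfl fun x _ => by ring
  have hC : (∑ r, ∑ i, ∑ j, ε i r ^ 2 * ε j r ^ 2)
      = ∑ p, (∑ x, ε x p * ε x p) * (∑ x, ε x p * ε x p) := by
    refine Finset.sum_congr rfl fun p _ => ?_
    rw [Finset.sum_mul_sum]
    exact Finset.sum_congr rfl fun i _ => Finset.sum_congr rfl fun j _ => by ring
  have hT : (εᵀ * ε).trace = ∑ p, ∑ x, ε x p * ε x p := by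
    simp [Matrix.trace, Matrix.diag, Matrix.mul_apply, Matrix.transpose_apply]
  have hU : (εᵀ * ε * εᵀ * ε).trace
      = ∑ p, ∑ q, (∑ x, ε x p * ε x q) * (∑ x, ε x p * ε x q) := by
    rw [Matrix.mul_assoc (εᵀ * ε) εᵀ ε]
    simp only [Matrix.trace, Matrix.diag, Matrix.mul_apply, Matrix.transpose_apply]
    refine Finset.sum_congr rfl fun p _ => Finset.sum_congr rfl fun q _ => ?_
    congr 1
    exact Finset.sum_congr rfl fun y _ => by ring
  rw [step0, key, P1, P2, P3, P4, hA, hB, hC, hT, hU]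
  simp only [Finset.sum_add_distrib, Finset.sum_sub_distrib, ← Finset.mul_sum, ← Finset.sum_mul]
  ring
end

section
/- The number of ordered pairs (ρ, σ) of perfect matchings (partitions into blocks of size 2) of the set {1,...,2k} whose join ρ∨σ in the partition lattice is the one-block partition equals (2k−1)!. -/
/-!
Write the two matchings as fixed-point-free involutions `f`, `g` and put `c = g ∘ f`. Since
`c^j ∘ f ∘ c^j = f`, the `c`-orbits of a point `a` and of `f a` are disjoint; if the join is the
one-block partition, they cover everything, so both have `k` elements and the alternating walk
`a, f a, c a, f (c a), …` lists every point exactly once. Reading the walk as a bijection from the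
`2k`-cycle, the pair is the image of the standard pair of matchings of the cycle (its even and its
odd edges) under a bijection sending the vertex `0` to `a`, and such a bijection is unique. Hence
connected pairs correspond to the bijections sending `0` to `a`, of which there are `(2k - 1)!`.
-/

open Function Set Equiv

variable {α β : Type*}

namespace Function.Involutive

variable {f g : α → α}

def toSetoid (hf : Involutive f) : Setoid α where
  r x y := y = x ∨ y = f x
  iseqv.refl _ := .inl rfl
  iseqv.symm := by
    rintro x _ (rfl | rfl)
    exacts [.inl rfl, .inr (hf x).symm]
  iseqv.trans := by
    rintro x _ _ (rfl | rfl) (rfl | rfl)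
    exacts [.inl rfl, .inr rfl, .inr rfl, .inl (hf x)]

theorem card_toSetoid_class (hf : Involutive f) (hf' : ∀ x, f x ≠ x) (x : α) :
    Nat.card {y // hf.toSetoid.r x y} = 2 := by
  rw [Nat.card_eq_two_iff' ⟨x, .inl rfl⟩]
  refine ⟨⟨f x, .inr rfl⟩, fun h => hf' x (congrArg Subtype.val h), ?_⟩
  rintro ⟨y, rfl | rfl⟩ hy
  exacts [absurd rfl hy, rfl]

theorem eq_of_toSetoid_eq (hf : Involutive f) (hg : Involutive g) (hg' : ∀ x, g x ≠ x)
    (h : hf.toSetoid = hg.toSetoid) : f = g := by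
  funext x
  have : hf.toSetoid.r x (g x) := h ▸ .inr rfl
  exact (this.resolve_left (hg' x)).symm

theorem equiv_conj {F : β → β} (hF : Involutive F) (w : β ≃ α) : Involutive (w.conj F) :=
  fun x => by simp [hF _]

end Function.Involutive

theorem Setoid.exists_toSetoid_eq (s : Setoid α) (hs : ∀ x, Nat.card {y // s.r x y} = 2) :
    ∃ f, ∃ hf : Involutive f, (∀ x, f x ≠ x) ∧ hf.toSetoid = s := by
  choose f hf hf_unique using fun x => (Nat.card_eq_two_iff' ⟨x, s.refl x⟩).1 (hs x)
  have hne (x : α) : (f x).1 ≠ x := fun h => hf x (Subtype.ext h)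
  have hr {x y : α} : s.r x y ↔ y = x ∨ y = f x := by
    refine ⟨fun h => or_iff_not_imp_left.2 fun hy => ?_, ?_⟩
    · exact congrArg Subtype.val (hf_unique x ⟨y, h⟩ fun h' => hy (congrArg Subtype.val h'))
    · rintro (rfl | rfl)
      exacts [s.refl _, (f x).2]
  have hinv : Involutive fun x => (f x).1 := fun x =>
    ((hr.1 (s.symm (f x).2)).resolve_left (hne x).symm).symm
  exact ⟨_, hinv, hne, Setoid.ext fun _ _ => hr.symm⟩

def ReachesAll (f g : α → α) (a : α) : Prop :=
  ∀ S : Set α, a ∈ S → MapsTo f S S → MapsTo g S S → S = univ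

theorem Function.Involutive.sup_toSetoid_eq_top_iff {f g : α → α} (hf : Involutive f)
    (hg : Involutive g) (a : α) : hf.toSetoid ⊔ hg.toSetoid = ⊤ ↔ ReachesAll f g a := by
  rw [Setoid.sup_eq_eqvGen, eq_top_iff]
  refine ⟨fun h S ha hfS hgS => eq_univ_of_forall fun x => ?_, fun h => ?_⟩
  · have hS : Relation.EqvGen.setoid (fun x y => hf.toSetoid.r x y ∨ hg.toSetoid.r x y) ≤
        Setoid.ker (· ∈ S) := Setoid.eqvGen_le <| by
      rintro y _ ((rfl | rfl) | (rfl | rfl))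
      · rfl
      · exact propext ⟨(hfS ·), fun hz => hf y ▸ hfS hz⟩
      · rfl
      · exact propext ⟨(hgS ·), fun hz => hg y ▸ hgS hz⟩
    exact (Setoid.ker_def.1 (hS (h trivial)) : (a ∈ S) = (x ∈ S)) ▸ ha
  · set R := Relation.EqvGen.setoid fun x y => hf.toSetoid.r x y ∨ hg.toSetoid.r x y
    have hS := h {x | R.r a x} (R.refl a)
      (fun x hx => R.trans hx (.rel _ _ (.inl (.inr rfl))))
      (fun x hx => R.trans hx (.rel _ _ (.inr (.inr rfl))))
    have hR (x : α) : R.r a x := (hS ▸ mem_univ x : x ∈ {x | R.r a x})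
    exact fun x y _ => R.trans (R.symm (hR x)) (hR y)

namespace ReachesAll

variable {F G : β → β} {f g : α → α} {b : β}

theorem map {w : β → α} (h : ReachesAll F G b) (hw : Surjective w)
    (hF : Semiconj w F f) (hG : Semiconj w G g) : ReachesAll f g (w b) := by
  intro S hb hfS hgS
  have := h (w ⁻¹' S) hb (fun x hx => by simpa [mem_preimage, hF x] using hfS hx)
    (fun x hx => by simpa [mem_preimage, hG x] using hgS hx)
  rwa [preimage_eq_univ_iff, hw.range_eq, univ_subset_iff] at this

theorem eq_of_semiconj {u v : β → α} (h : ReachesAll F G b) (huF : Semiconj u F f)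
    (hvF : Semiconj v F f) (huG : Semiconj u G g) (hvG : Semiconj v G g) (hb : u b = v b) :
    u = v := by
  have := h {x | u x = v x} hb (fun x (hx : u x = v x) => by simp [huF x, hvF x, hx])
    (fun x (hx : u x = v x) => by simp [huG x, hvG x, hx])
  exact funext fun x => (this ▸ mem_univ x : x ∈ {x | u x = v x})

end ReachesAll

section Orbits

variable {f g : α → α}

theorem iterate_comp_apply_iterate_comp (hf : Involutive f) (hg : Involutive g) (j : ℕ) (x : α) :
    (g ∘ f)^[j] (f ((g ∘ f)^[j] x)) = f x := by
  induction j with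
  | zero => rfl
  | succ j ih =>
    rw [iterate_succ_apply, iterate_succ_apply']
    simpa [hf _, hg _] using ih

/- Write `c = g ∘ f` and `y = c^t x`, so that `c^t (f y) = f x`. If `f x = c^(2t) x` then `y` is
a fixed point of `f`; if `f x = c^(2t+1) x` then `f y` is a fixed point of `g`. -/
theorem apply_ne_iterate_comp (hf : Involutive f) (hg : Involutive g) (hf' : ∀ x, f x ≠ x)
    (hg' : ∀ x, g x ≠ x) (x : α) (m : ℕ) : f x ≠ (g ∘ f)^[m] x := by
  have hinj (t : ℕ) : Injective (g ∘ f)^[t] := (hg.injective.comp hf.injective).iterate t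
  obtain ⟨t, rfl | rfl⟩ := m.even_or_odd' <;> intro h <;>
    rw [← iterate_comp_apply_iterate_comp hf hg t x] at h
  · rw [two_mul, iterate_add_apply] at h
    exact hf' _ (hinj t h)
  · rw [show 2 * t + 1 = t + (t + 1) by ring, iterate_add_apply, iterate_succ_apply'] at h
    exact hg' _ (hinj t h).symm

theorem apply_iterate_comp_ne_iterate_comp (hf : Involutive f) (hg : Involutive g)
    (hf' : ∀ x, f x ≠ x) (hg' : ∀ x, g x ≠ x) (a : α) (i j : ℕ) :
    f ((g ∘ f)^[i] a) ≠ (g ∘ f)^[j] a := fun h => by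
  apply apply_ne_iterate_comp hf hg hf' hg' a (i + j)
  rw [← iterate_comp_apply_iterate_comp hf hg i a, h, iterate_add_apply]

end Orbits

/- `(j, b) : Fin m × Bool` stands for the vertex `2j + b` of the `2m`-cycle: `evenPairing` matches
`2j` with `2j + 1`, and `oddPairing` matches `2j + 1` with `2j + 2` (mod `2m`). -/

def evenPairing (m : ℕ) (p : Fin m × Bool) : Fin m × Bool := (p.1, !p.2)

def oddPairing (m : ℕ) [NeZero m] (p : Fin m × Bool) : Fin m × Bool :=
  bif p.2 then (p.1 + 1, false) else (p.1 - 1, true)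

section Pairings

variable (m : ℕ)

theorem evenPairing_involutive : Involutive (evenPairing m) := fun p => by simp [evenPairing]

theorem evenPairing_ne (p : Fin m × Bool) : evenPairing m p ≠ p := fun h => by
  simpa [evenPairing] using congrArg Prod.snd h

variable [NeZero m]

theorem oddPairing_involutive : Involutive (oddPairing m) := by
  rintro ⟨j, _ | _⟩ <;> simp [oddPairing]

theorem oddPairing_ne (p : Fin m × Bool) : oddPairing m p ≠ p := fun h => by
  cases p with | mk j b => cases b <;> simp [oddPairing] at h

open Fin.NatCast in
theorem reachesAll_evenPairing_oddPairing :
    ReachesAll (evenPairing m) (oddPairing m) (0, false) := by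
  intro S h0 hF hG
  have hfalse (n : ℕ) : ((n : Fin m), false) ∈ S := by
    induction n with
    | zero => simpa using h0
    | succ n ih => simpa [evenPairing, oddPairing] using hG (hF ih)
  refine eq_univ_of_forall fun ⟨j, b⟩ => ?_
  rw [← Fin.cast_val_eq_self j]
  cases b
  exacts [hfalse j, hF (hfalse j)]

end Pairings

def alternatingWalk (f g : α → α) (a : α) (m : ℕ) (p : Fin m × Bool) : α :=
  bif p.2 then f ((g ∘ f)^[p.1] a) else (g ∘ f)^[p.1] a

section AlternatingWalk

variable {f g : α → α} {a : α} {m : ℕ}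

theorem alternatingWalk_semiconj_evenPairing (hf : Involutive f) :
    Semiconj (alternatingWalk f g a m) (evenPairing m) f := by
  rintro ⟨j, _ | _⟩ <;> simp [alternatingWalk, evenPairing, hf _]

theorem alternatingWalk_semiconj_oddPairing [NeZero m] (hg : Involutive g)
    (ha : IsPeriodicPt (g ∘ f) m a) : Semiconj (alternatingWalk f g a m) (oddPairing m) g := by
  have htrue (j : Fin m) : alternatingWalk f g a m (oddPairing m (j, true)) =
      g (alternatingWalk f g a m (j, true)) := by
    simp only [alternatingWalk, oddPairing, cond_true, cond_false]
    rw [Fin.val_add, Fin.val_one', Nat.add_mod_mod, ha.iterate_mod_apply, iterate_succ_apply']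
    rfl
  rintro ⟨j, _ | _⟩
  · obtain ⟨i, hi⟩ : ∃ i, oddPairing m (i, true) = (j, false) :=
      ⟨j - 1, by simp [oddPairing]⟩
    rw [← hi, oddPairing_involutive, htrue, hg]
  · exact htrue j

theorem alternatingWalk_injective (hf : Involutive f) (hg : Involutive g) (hf' : ∀ x, f x ≠ x)
    (hg' : ∀ x, g x ≠ x) (hm : minimalPeriod (g ∘ f) a = m) :
    Injective (alternatingWalk f g a m) := by
  have hiter {i j : Fin m} (h : (g ∘ f)^[i] a = (g ∘ f)^[j] a) : i = j :=
    Fin.ext <| iterate_injOn_Iio_minimalPeriod (hm ▸ i.2 : (i : ℕ) ∈ Iio _)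
      (hm ▸ j.2 : (j : ℕ) ∈ Iio _) h
  rintro ⟨i, _ | _⟩ ⟨j, _ | _⟩ h <;> simp only [alternatingWalk, cond_true, cond_false] at h
  · rw [hiter h]
  · exact absurd h.symm (apply_iterate_comp_ne_iterate_comp hf hg hf' hg' a j i)
  · exact absurd h (apply_iterate_comp_ne_iterate_comp hf hg hf' hg' a i j)
  · rw [hiter (hf.injective h)]

theorem alternatingWalk_surjective [NeZero m] (hf : Involutive f) (hg : Involutive g)
    (ha : IsPeriodicPt (g ∘ f) m a) (h : ReachesAll f g a) :
    Surjective (alternatingWalk f g a m) := by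
  refine range_eq_univ.1 (h _ ⟨(0, false), rfl⟩ ?_ ?_) <;> rintro _ ⟨p, rfl⟩
  exacts [⟨_, alternatingWalk_semiconj_evenPairing hf p⟩,
    ⟨_, alternatingWalk_semiconj_oddPairing hg ha p⟩]

theorem exists_equiv_semiconj_pairings [Finite α] (hf : Involutive f) (hg : Involutive g)
    (hf' : ∀ x, f x ≠ x) (hg' : ∀ x, g x ≠ x) (h : ReachesAll f g a) {k : ℕ} [NeZero k]
    (hk : Nat.card α = 2 * k) :
    ∃ w : Fin k × Bool ≃ α, w (0, false) = a ∧ Semiconj w (evenPairing k) f ∧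
      Semiconj w (oddPairing k) g := by
  have hper := isPeriodicPt_minimalPeriod (g ∘ f) a
  have hpos := minimalPeriod_pos_of_mem_periodicPts
    ((hg.injective.comp hf.injective).mem_periodicPts a)
  generalize hd : minimalPeriod (g ∘ f) a = d at hper hpos
  have : NeZero d := ⟨hpos.ne'⟩
  have hbij : Bijective (alternatingWalk f g a d) :=
    ⟨alternatingWalk_injective hf hg hf' hg' hd, alternatingWalk_surjective hf hg hper h⟩
  obtain rfl : d = k := by
    have := Nat.card_eq_of_bijective _ hbij
    simp only [Nat.card_eq_fintype_card, Fintype.card_prod, Fintype.card_fin,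
      Fintype.card_bool] at this
    omega
  exact ⟨.ofBijective _ hbij, rfl, alternatingWalk_semiconj_evenPairing hf,
    alternatingWalk_semiconj_oddPairing hg hper⟩

end AlternatingWalk

theorem Equiv.conj_apply_ne {F : β → β} (hF : ∀ x, F x ≠ x) (w : β ≃ α) (x : α) :
    w.conj F x ≠ x := fun h => hF _ (w.eq_symm_apply.2 h)

theorem Equiv.conj_eq_of_semiconj {F : β → β} {f : α → α} {w : β ≃ α}
    (h : Semiconj w F f) : w.conj F = f :=
  funext fun x => by simpa using h (w.symm x)

theorem Nat.card_subtype_equiv_apply_eq [Finite α] [Finite β] (h : Nat.card β = Nat.card α)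
    (b : β) (a : α) : Nat.card {w : β ≃ α // w b = a} = (Nat.card α - 1).factorial := by
  classical
  have hA : Nat.card {y // y ≠ a} + 1 = Nat.card α := by
    rw [← Finite.card_option, Nat.card_congr (optionSubtypeNe a)]
  have hB : Nat.card {x // x ≠ b} + 1 = Nat.card β := by
    rw [← Finite.card_option, Nat.card_congr (optionSubtypeNe b)]
  obtain ⟨e⟩ : Nonempty ({x // x ≠ b} ≃ {y // y ≠ a}) := Finite.card_eq.1 (by omega)
  calc Nat.card {w : β ≃ α // w b = a}
      = Nat.card {w : Option {x // x ≠ b} ≃ α // w none = a} :=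
        Nat.card_congr <| (equivCongr (optionSubtypeNe b).symm (.refl α)).subtypeEquiv
          fun w => by simp
    _ = Nat.card ({x // x ≠ b} ≃ {y // y ≠ a}) := Nat.card_congr (optionSubtype a)
    _ = Nat.card (Perm {y // y ≠ a}) := Nat.card_congr (equivCongr e (.refl _))
    _ = (Nat.card α - 1).factorial := by rw [Nat.card_perm, ← hA, Nat.add_sub_cancel]

abbrev ConnectedMatchingPairs (α : Type*) :=
  {p : Setoid α × Setoid α // (∀ x, Nat.card {y // p.1.r x y} = 2) ∧
    (∀ x, Nat.card {y // p.2.r x y} = 2) ∧ p.1 ⊔ p.2 = ⊤}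

def matchingPairOfEquiv {k : ℕ} [NeZero k] (w : Fin k × Bool ≃ α) :
    ConnectedMatchingPairs α :=
  have hF := (evenPairing_involutive k).equiv_conj w
  have hG := (oddPairing_involutive k).equiv_conj w
  ⟨(hF.toSetoid, hG.toSetoid),
    hF.card_toSetoid_class (w.conj_apply_ne (evenPairing_ne k)),
    hG.card_toSetoid_class (w.conj_apply_ne (oddPairing_ne k)),
    (hF.sup_toSetoid_eq_top_iff hG (w (0, false))).2 <|
      (reachesAll_evenPairing_oddPairing k).map w.surjective (w.semiconj_conj _)
        (w.semiconj_conj _)⟩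

theorem bijective_matchingPairOfEquiv [Finite α] {k : ℕ} [NeZero k] (hk : Nat.card α = 2 * k)
    (a : α) : Bijective fun w : {w : Fin k × Bool ≃ α // w (0, false) = a} =>
      matchingPairOfEquiv w.1 := by
  constructor
  · rintro ⟨w, hw⟩ ⟨w', hw'⟩ h
    obtain ⟨hF, hG⟩ := Prod.mk.inj (congrArg Subtype.val h)
    dsimp only [matchingPairOfEquiv] at hF hG
    replace hF := Involutive.eq_of_toSetoid_eq _ _ (w'.conj_apply_ne (evenPairing_ne k)) hF
    replace hG := Involutive.eq_of_toSetoid_eq _ _ (w'.conj_apply_ne (oddPairing_ne k)) hG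
    exact Subtype.ext <| Equiv.coe_inj.1 <| (reachesAll_evenPairing_oddPairing k).eq_of_semiconj
      (w.semiconj_conj _) (hF ▸ w'.semiconj_conj _) (w.semiconj_conj _)
      (hG ▸ w'.semiconj_conj _) (hw.trans hw'.symm)
  · rintro ⟨⟨ρ, σ⟩, hρ, hσ, hsup⟩
    obtain ⟨f, hf, hf', rfl⟩ := ρ.exists_toSetoid_eq hρ
    obtain ⟨g, hg, hg', rfl⟩ := σ.exists_toSetoid_eq hσ
    obtain ⟨w, hw, hwF, hwG⟩ := exists_equiv_semiconj_pairings hf hg hf' hg'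
      ((hf.sup_toSetoid_eq_top_iff hg a).1 hsup) hk
    refine ⟨⟨w, hw⟩, Subtype.ext (Prod.ext ?_ ?_)⟩ <;> dsimp only [matchingPairOfEquiv] <;>
      congr 1
    exacts [Equiv.conj_eq_of_semiconj hwF, Equiv.conj_eq_of_semiconj hwG]

/-- The number of ordered pairs of perfect matchings of `{1,…,2k}` (partitions with all
blocks of size two) whose join is the one-block partition equals `(2k−1)!`. -/
theorem card_connected_matching_pairs (k : ℕ) :
    Nat.card {p : Setoid (Fin (2 * k)) × Setoid (Fin (2 * k)) //
        (∀ x, Nat.card {y // p.1.r x y} = 2) ∧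
        (∀ x, Nat.card {y // p.2.r x y} = 2) ∧
        p.1 ⊔ p.2 = ⊤} = (2 * k - 1).factorial := by
  rcases eq_or_ne k 0 with rfl | hk
  · refine Nat.card_eq_one_iff_unique.2
      ⟨⟨fun p q => ?_⟩, ⟨⟨(⊤, ⊤), finZeroElim, finZeroElim, sup_idem _⟩⟩⟩
    exact Subtype.ext (Prod.ext (Setoid.ext finZeroElim) (Setoid.ext finZeroElim))
  have : NeZero k := ⟨hk⟩
  have hcard : Nat.card (Fin (2 * k)) = 2 * k := Nat.card_fin _
  rw [← Nat.card_eq_of_bijective _ (bijective_matchingPairOfEquiv hcard 0),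
    Nat.card_subtype_equiv_apply_eq (by simp [mul_comm]), hcard]
end
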